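/- arXiv:math/0407474 — 3 statements merged into one kernel-verified Lean document; each statement's English description precedes it below -/
import Mathlib

section
/- Let Ω ⊆ ℝⁿ be open and let u : Ω → ℝ be a C³ solution of the minimal surface equation div(∇u/√(1+|∇u|²)) = 0 on Ω. Set v = √(1+|∇u|²), ν = ∇u/v and g^{ij} = δ^{ij} − ν^i ν^j. Then at every point of Ω, Σ_{i,j} g^{ij} v_{ij} ≥ (2/v)·Σ_{i,j} g^{ij} v_i v_j, where v_i and v_{ij} denote the first and second partial derivatives of the function v. -/
open scoped BigOperators

/-- The partial derivative `∂f/∂xᵢ` of a function on Euclidean space. -/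
noncomputable def pd {n : ℕ} (i : Fin n) (f : EuclideanSpace ℝ (Fin n) → ℝ)
    (x : EuclideanSpace ℝ (Fin n)) : ℝ :=
  fderiv ℝ f x (EuclideanSpace.single i 1)

/-- `v = √(1 + |∇u|²)`. -/
noncomputable def vGrad {n : ℕ} (u : EuclideanSpace ℝ (Fin n) → ℝ)
    (x : EuclideanSpace ℝ (Fin n)) : ℝ :=
  Real.sqrt (1 + ∑ i, (pd i u x) ^ 2)

/-- `νⁱ = uᵢ / v`. -/
noncomputable def nuVec {n : ℕ} (u : EuclideanSpace ℝ (Fin n) → ℝ) (i : Fin n)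
    (x : EuclideanSpace ℝ (Fin n)) : ℝ :=
  pd i u x / vGrad u x

/-- `gⁱʲ = δⁱʲ − νⁱ νʲ`. -/
noncomputable def gIJ {n : ℕ} (u : EuclideanSpace ℝ (Fin n) → ℝ) (i j : Fin n)
    (x : EuclideanSpace ℝ (Fin n)) : ℝ :=
  (if i = j then (1 : ℝ) else 0) - nuVec u i x * nuVec u j x

/-- `u` solves the minimal surface equation `div(∇u/√(1+|∇u|²)) = 0` on `Ω`. -/
def SolvesMSE {n : ℕ} (u : EuclideanSpace ℝ (Fin n) → ℝ)
    (Ω : Set (EuclideanSpace ℝ (Fin n))) : Prop :=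
  ∀ x ∈ Ω, ∑ i, pd i (fun y => pd i u y / vGrad u y) x = 0

/-!
Write `H = D²u` and `g = I - ν νᵀ`. Then `∇v = H ν` and `∂ᵢνₖ = (H g)ᵢₖ / v`, and the minimal
surface equation reads `gⁱʲ uᵢⱼ = 0`. Differentiating it in the direction `∂ₖ` and contracting
with `νᵏ` eliminates the third derivatives of `u` from `gⁱʲ vᵢⱼ`, leaving the identity
`v gⁱʲ vᵢⱼ = ⟨g, H g H⟩ + 2 gⁱʲ vᵢ vⱼ` (Frobenius pairing). Since `|ν| < 1`, `g` is positive
semidefinite, hence so is `H g H`, and the Frobenius pairing of two positive semidefinite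
matrices is nonnegative by the Schur product theorem.
-/

open Filter Topology Matrix

namespace Matrix

variable {ι : Type*} [Fintype ι]

theorem posSemidef_one_sub_vecMulVec_self [DecidableEq ι] {ν : ι → ℝ} (hν : ν ⬝ᵥ ν ≤ 1) :
    (1 - vecMulVec ν ν).PosSemidef := by
  refine PosSemidef.of_dotProduct_mulVec_nonneg ?_ fun y => ?_
  · simp [IsHermitian, conjTranspose_eq_transpose_of_trivial, transpose_vecMulVec]
  · have hCS : (ν ⬝ᵥ y) ^ 2 ≤ (ν ⬝ᵥ ν) * (y ⬝ᵥ y) := by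
      simpa [dotProduct, sq] using Finset.sum_mul_sq_le_sq_mul_sq Finset.univ ν y
    have hy : 0 ≤ y ⬝ᵥ y := by
      simpa [dotProduct, ← sq] using Finset.sum_nonneg fun i _ => sq_nonneg (y i)
    simp only [star_trivial, sub_mulVec, one_mulVec, vecMulVec_mulVec, dotProduct_sub,
      dotProduct_smul, op_smul_eq_mul, dotProduct_comm y ν]
    nlinarith

theorem PosSemidef.sum_sum_mul_nonneg {A B : Matrix ι ι ℝ} (hA : A.PosSemidef)
    (hB : B.PosSemidef) : 0 ≤ ∑ i, ∑ j, A i j * B i j := by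
  simpa [dotProduct, mulVec, Finset.mul_sum] using (hA.hadamard hB).dotProduct_mulVec_nonneg 1

theorem IsSymm.sum_sum_vecMulVec_add_vecMulVec_mul {H : Matrix ι ι ℝ} (hH : H.IsSymm)
    (a b : ι → ℝ) :
    ∑ i, ∑ j, (vecMulVec a b + vecMulVec b a) i j * H i j = 2 * (a ⬝ᵥ H *ᵥ b) := by
  simp only [Matrix.add_apply, vecMulVec_apply, add_mul, Finset.sum_add_distrib, dotProduct,
    mulVec, Finset.mul_sum]
  rw [Finset.sum_comm (f := fun i j => b i * a j * H i j), ← Finset.sum_add_distrib]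
  refine Finset.sum_congr rfl fun i _ => ?_
  rw [← Finset.sum_add_distrib]
  refine Finset.sum_congr rfl fun j _ => ?_
  rw [hH.apply i j]
  ring

theorem sum_sum_mul_sum_smul_apply {κ : Type*} [Fintype κ] (G : Matrix ι ι ℝ) (c : κ → ℝ)
    (T : κ → Matrix ι ι ℝ) :
    ∑ i, ∑ j, G i j * (∑ k, c k • T k) i j = ∑ k, c k * ∑ i, ∑ j, G i j * T k i j := by
  simp only [Matrix.sum_apply, Matrix.smul_apply, smul_eq_mul, Finset.mul_sum]
  calc _ = ∑ i, ∑ k, ∑ j, c k * (G i j * T k i j) :=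
        Finset.sum_congr rfl fun i _ => by
          rw [Finset.sum_comm]
          exact Finset.sum_congr rfl fun k _ => Finset.sum_congr rfl fun j _ => by ring
    _ = _ := Finset.sum_comm

end Matrix

noncomputable def hess {n : ℕ} (f : EuclideanSpace ℝ (Fin n) → ℝ) (x : EuclideanSpace ℝ (Fin n)) :
    Matrix (Fin n) (Fin n) ℝ :=
  Matrix.of fun i j => pd i (pd j f) x

section PartialDerivatives

variable {n : ℕ} {f g : EuclideanSpace ℝ (Fin n) → ℝ} {x : EuclideanSpace ℝ (Fin n)}
  {i j k : Fin n}

theorem pd_congr_of_eventuallyEq (h : f =ᶠ[𝓝 x] g) : pd i f x = pd i g x := by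
  rw [pd, pd, h.fderiv_eq]

theorem pd_const (c : ℝ) : pd i (fun _ => c) x = 0 := by
  simp [pd]

theorem pd_const_add (c : ℝ) : pd i (fun y => c + f y) x = pd i f x := by
  simp [pd, fderiv_const_add]

theorem pd_const_sub (c : ℝ) : pd i (fun y => c - f y) x = -pd i f x := by
  simp [pd, fderiv_const_sub]

theorem pd_fun_mul (hf : DifferentiableAt ℝ f x) (hg : DifferentiableAt ℝ g x) :
    pd i (fun y => f y * g y) x = pd i f x * g x + f x * pd i g x := by
  simp [pd, fderiv_fun_mul hf hg, add_comm, mul_comm]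

theorem pd_fun_sum {ι : Type*} (s : Finset ι) {F : ι → EuclideanSpace ℝ (Fin n) → ℝ}
    (h : ∀ k ∈ s, DifferentiableAt ℝ (F k) x) :
    pd i (fun y => ∑ k ∈ s, F k y) x = ∑ k ∈ s, pd i (F k) x := by
  simp [pd, fderiv_fun_sum h]

theorem pd_comp_of_hasDerivAt {h : ℝ → ℝ} {h' : ℝ} (hh : HasDerivAt h h' (f x))
    (hf : DifferentiableAt ℝ f x) : pd i (fun y => h (f y)) x = h' * pd i f x := by
  simp [pd, ← Function.comp_def, (hh.comp_hasFDerivAt x hf.hasFDerivAt).fderiv]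

theorem pd_fun_div (hf : DifferentiableAt ℝ f x) (hg : DifferentiableAt ℝ g x) (h0 : g x ≠ 0) :
    pd i (fun y => f y / g y) x = (pd i f x * g x - f x * pd i g x) / g x ^ 2 := by
  simp only [div_eq_mul_inv]
  rw [pd_fun_mul (g := fun y => (g y)⁻¹) hf (hg.inv h0),
    pd_comp_of_hasDerivAt (hasDerivAt_inv h0) hg]
  field_simp
  ring

theorem ContDiffAt.pd {m : WithTop ℕ∞} (hf : ContDiffAt ℝ (m + 1) f x) :
    ContDiffAt ℝ m (pd i f) x :=
  (hf.fderiv_right le_rfl).clm_apply contDiffAt_const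

theorem pd_comm (hf : ContDiffAt ℝ 2 f x) : pd i (pd j f) x = pd j (pd i f) x := by
  have hdf : DifferentiableAt ℝ (fderiv ℝ f) x :=
    (hf.fderiv_right (m := 1) one_add_one_eq_two.le).differentiableAt one_ne_zero
  have hpd : ∀ k, pd k f = fun y => fderiv ℝ f y (EuclideanSpace.single k 1) := fun _ => rfl
  rw [pd, pd, hpd, hpd, fderiv_clm_apply hdf (differentiableAt_const _),
    fderiv_clm_apply hdf (differentiableAt_const _)]
  simpa using hf.isSymmSndFDerivAt (by simp) _ _

theorem hess_isSymm (hf : ContDiffAt ℝ 2 f x) : (hess f x).IsSymm :=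
  IsSymm.ext fun _ _ => pd_comm hf

theorem pd_pd_pd_comm (hf : ContDiffAt ℝ 3 f x) :
    pd i (pd j (pd k f)) x = pd k (pd i (pd j f)) x := by
  have hjk : pd j (pd k f) =ᶠ[𝓝 x] pd k (pd j f) :=
    (hf.eventually (by simp)).mono fun y hy => pd_comm (hy.of_le (by norm_num))
  rw [pd_congr_of_eventuallyEq hjk, pd_comm hf.pd]

end PartialDerivatives

noncomputable def gMat {n : ℕ} (u : EuclideanSpace ℝ (Fin n) → ℝ) (x : EuclideanSpace ℝ (Fin n)) :
    Matrix (Fin n) (Fin n) ℝ :=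
  Matrix.of fun i j => gIJ u i j x

section MinimalGraph

variable {n : ℕ} {u : EuclideanSpace ℝ (Fin n) → ℝ} {x : EuclideanSpace ℝ (Fin n)}
  {i j k : Fin n}

theorem vGrad_pos : 0 < vGrad u x :=
  Real.sqrt_pos.mpr (by positivity)

theorem nuVec_dotProduct_nuVec_le_one :
    (fun i => nuVec u i x) ⬝ᵥ (fun i => nuVec u i x) ≤ 1 := by
  have hv : vGrad u x ^ 2 = 1 + ∑ i, pd i u x ^ 2 := Real.sq_sqrt (by positivity)
  simp only [dotProduct, nuVec, ← sq, div_pow, ← Finset.sum_div]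
  rw [div_le_one (pow_pos vGrad_pos 2), hv]
  linarith

theorem gMat_eq : gMat u x = 1 - vecMulVec (fun i => nuVec u i x) (fun i => nuVec u i x) := by
  ext i j
  simp [gMat, gIJ, one_apply, vecMulVec_apply]

theorem gIJ_comm : gIJ u i j x = gIJ u j i x := by
  simp only [gIJ, eq_comm (a := i), mul_comm]

theorem ContDiffAt.vGrad {m : WithTop ℕ∞} (hu : ContDiffAt ℝ (m + 1) u x) :
    ContDiffAt ℝ m (vGrad u) x :=
  (contDiffAt_const.add (ContDiffAt.sum fun k _ => (hu.pd (i := k)).pow 2)).sqrt (by positivity)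

theorem ContDiffAt.nuVec {m : WithTop ℕ∞} (hu : ContDiffAt ℝ (m + 1) u x) :
    ContDiffAt ℝ m (nuVec u i) x :=
  hu.pd.div hu.vGrad vGrad_pos.ne'

theorem pd_vGrad (hu : ContDiffAt ℝ 2 u x) :
    pd j (vGrad u) x = (hess u x *ᵥ fun k => nuVec u k x) j := by
  have hd : ∀ k, DifferentiableAt ℝ (pd k u) x := fun k =>
    (hu.pd (m := 1)).differentiableAt one_ne_zero
  have hsq : ∀ k, pd j (fun y => pd k u y ^ 2) x = 2 * pd k u x * pd j (pd k u) x := fun k => by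
    rw [pd_comp_of_hasDerivAt (hasDerivAt_pow 2 _) (hd k)]
    ring
  have hF : DifferentiableAt ℝ (fun y => 1 + ∑ k, pd k u y ^ 2) x := by fun_prop
  change pd j (fun y => Real.sqrt (1 + ∑ k, pd k u y ^ 2)) x = _
  rw [pd_comp_of_hasDerivAt (Real.hasDerivAt_sqrt (by positivity)) hF, pd_const_add,
    pd_fun_sum (F := fun k y => pd k u y ^ 2) _ fun k _ => (hd k).pow 2]
  have hv : vGrad u x ≠ 0 := vGrad_pos.ne'
  rw [← vGrad]
  simp only [hsq, mulVec, dotProduct, hess, of_apply, nuVec, Finset.mul_sum]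
  refine Finset.sum_congr rfl fun k _ => ?_
  field_simp

theorem pd_nuVec (hu : ContDiffAt ℝ 2 u x) :
    pd i (nuVec u k) x = (hess u x * gMat u x) i k / vGrad u x := by
  rw [gMat_eq, mul_sub, mul_one, mul_vecMulVec, Matrix.sub_apply, vecMulVec_apply,
    ← pd_vGrad hu]
  change pd i (fun y => pd k u y / vGrad u y) x = _
  rw [pd_fun_div ((hu.pd (m := 1)).differentiableAt one_ne_zero)
    ((hu.vGrad (m := 1)).differentiableAt one_ne_zero) vGrad_pos.ne']
  have hv : vGrad u x ≠ 0 := vGrad_pos.ne'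
  simp only [hess, of_apply, nuVec]
  field_simp

theorem sum_pd_nuVec (hu : ContDiffAt ℝ 2 u x) :
    ∑ i, pd i (nuVec u i) x = (∑ i, ∑ j, gIJ u i j x * pd i (pd j u) x) / vGrad u x := by
  simp only [pd_nuVec hu, ← Finset.sum_div, mul_apply, hess, gMat, of_apply]
  congr 1
  exact Finset.sum_congr rfl fun i _ => Finset.sum_congr rfl fun j _ => by
    rw [gIJ_comm, mul_comm]

theorem SolvesMSE.sum_gIJ_mul_pd_pd_eq_zero {Ω : Set (EuclideanSpace ℝ (Fin n))}
    (hmse : SolvesMSE u Ω) (hx : x ∈ Ω) (hu : ContDiffAt ℝ 2 u x) :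
    ∑ i, ∑ j, gIJ u i j x * pd i (pd j u) x = 0 := by
  have h := hmse x hx
  change ∑ i, pd i (nuVec u i) x = 0 at h
  rw [sum_pd_nuVec hu, div_eq_zero_iff] at h
  exact h.resolve_right vGrad_pos.ne'

theorem pd_gIJ (hu : ContDiffAt ℝ 2 u x) :
    pd k (gIJ u i j) x
      = -(pd k (nuVec u i) x * nuVec u j x + nuVec u i x * pd k (nuVec u j) x) := by
  change pd k (fun y => (if i = j then (1 : ℝ) else 0) - nuVec u i y * nuVec u j y) x = _
  rw [pd_const_sub, pd_fun_mul ((hu.nuVec (m := 1)).differentiableAt one_ne_zero)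
    ((hu.nuVec (m := 1)).differentiableAt one_ne_zero)]

theorem hess_vGrad (hu : ContDiffAt ℝ 3 u x) :
    hess (vGrad u) x = (vGrad u x)⁻¹ • (hess u x * gMat u x * (hess u x)ᵀ)
      + ∑ k, nuVec u k x • hess (pd k u) x := by
  ext i j
  have hev : pd j (vGrad u) =ᶠ[𝓝 x] fun y => ∑ k, pd j (pd k u) y * nuVec u k y :=
    (hu.eventually (by simp)).mono fun y hy => pd_vGrad (hy.of_le (by norm_num))
  have hpd2 : ∀ k, DifferentiableAt ℝ (pd j (pd k u)) x := fun k =>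
    (hu.pd.pd (m := 1)).differentiableAt one_ne_zero
  have hnu : ∀ k, DifferentiableAt ℝ (nuVec u k) x := fun k =>
    (hu.nuVec (m := 2)).differentiableAt (by norm_num)
  rw [hess, of_apply, pd_congr_of_eventuallyEq hev,
    pd_fun_sum _ fun k _ => (hpd2 k).fun_mul (hnu k)]
  simp only [pd_fun_mul (hpd2 _) (hnu _), pd_nuVec (hu.of_le (by norm_num)), Matrix.add_apply,
    Matrix.smul_apply, Matrix.sum_apply, mul_apply (M := hess u x * gMat u x), transpose_apply,
    smul_eq_mul, Finset.mul_sum, Finset.sum_add_distrib,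
    add_comm (∑ k, pd i (pd j (pd k u)) x * _)]
  congr 1 <;> refine Finset.sum_congr rfl fun k _ => ?_ <;> simp only [hess, of_apply] <;> ring

theorem sum_gMat_mul_hess_pd (hu : ContDiffAt ℝ 3 u x)
    (hmse : ∀ᶠ y in 𝓝 x, ∑ i, ∑ j, gIJ u i j y * pd i (pd j u) y = 0) (k : Fin n) :
    ∑ i, ∑ j, gMat u x i j * hess (pd k u) x i j
      = 2 / vGrad u x * ((hess u x * gMat u x) *ᵥ (hess u x *ᵥ fun i => nuVec u i x)) k := by
  have hg : ∀ i j, DifferentiableAt ℝ (gIJ u i j) x := fun i j =>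
    (differentiableAt_const _).sub (((hu.nuVec (m := 2)).differentiableAt (by norm_num)).mul
      ((hu.nuVec (m := 2)).differentiableAt (by norm_num)))
  have hH : ∀ i j, DifferentiableAt ℝ (pd i (pd j u)) x := fun i j =>
    (hu.pd.pd (m := 1)).differentiableAt one_ne_zero
  -- `∂ₖ (gⁱʲ uᵢⱼ) = 0`, expanded by the product rule
  have hzero := pd_congr_of_eventuallyEq (i := k) hmse
  rw [pd_fun_sum (F := fun i y => ∑ j, gIJ u i j y * pd i (pd j u) y) _ fun i _ => by fun_prop]
    at hzero
  simp only [pd_fun_sum (F := fun j y => gIJ u _ j y * pd _ (pd j u) y) _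
    fun j _ => (hg _ j).fun_mul (hH _ j)] at hzero
  simp only [pd_fun_mul (hg _ _) (hH _ _), Finset.sum_add_distrib, pd_const] at hzero
  set a : Fin n → ℝ := fun i => (hess u x * gMat u x) k i / vGrad u x
  have hpdg : ∀ i j, pd k (gIJ u i j) x
      = -(vecMulVec a (fun i => nuVec u i x) + vecMulVec (fun i => nuVec u i x) a) i j := by
    intro i j
    simp only [pd_gIJ (hu.of_le (by norm_num)), pd_nuVec (hu.of_le (by norm_num)), a,
      Matrix.add_apply, vecMulVec_apply]
  have hT : ∀ i j, hess (pd k u) x i j = pd k (pd i (pd j u)) x := fun i j => pd_pd_pd_comm hu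
  change ∑ i, ∑ j, gIJ u i j x * _ = _
  simp only [hT, eq_neg_of_add_eq_zero_right hzero, hpdg, neg_mul, Finset.sum_neg_distrib,
    neg_neg]
  refine ((hess_isSymm (hu.of_le (by norm_num))).sum_sum_vecMulVec_add_vecMulVec_mul a _).trans ?_
  rw [mulVec, dotProduct, dotProduct, Finset.mul_sum, Finset.mul_sum]
  exact Finset.sum_congr rfl fun i _ => by ring

theorem vGrad_mul_sum_gIJ_mul_pd_pd_vGrad (hu : ContDiffAt ℝ 3 u x)
    (hmse : ∀ᶠ y in 𝓝 x, ∑ i, ∑ j, gIJ u i j y * pd i (pd j u) y = 0) :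
    vGrad u x * ∑ i, ∑ j, gIJ u i j x * pd i (pd j (vGrad u)) x
      = ∑ i, ∑ j, gMat u x i j * (hess u x * gMat u x * (hess u x)ᵀ) i j
        + 2 * ∑ i, ∑ j, gIJ u i j x * pd i (vGrad u) x * pd j (vGrad u) x := by
  have hV : (fun i => pd i (vGrad u) x) = hess u x *ᵥ fun i => nuVec u i x :=
    funext fun i => pd_vGrad (hu.of_le (by norm_num))
  have hv : vGrad u x ≠ 0 := vGrad_pos.ne'
  have hVV : ∀ i j, pd i (pd j (vGrad u)) x = hess (vGrad u) x i j := fun _ _ => rfl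
  have hG : ∀ i j, gIJ u i j x = gMat u x i j := fun _ _ => rfl
  have hH : (hess u x).IsSymm := hess_isSymm (hu.of_le (by norm_num))
  simp only [hVV, hG, hess_vGrad hu, Matrix.add_apply, mul_add, Finset.sum_add_distrib,
    sum_sum_mul_sum_smul_apply, sum_gMat_mul_hess_pd hu hmse]
  congr 1
  · simp only [Matrix.smul_apply, smul_eq_mul, mul_left_comm _ (vGrad u x)⁻¹, ← Finset.mul_sum,
      inv_mul_cancel_left₀ hv]
  · have hquad : ∑ i, ∑ j, gMat u x i j * pd i (vGrad u) x * pd j (vGrad u) x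
        = (hess u x *ᵥ fun i => nuVec u i x) ⬝ᵥ gMat u x *ᵥ (hess u x *ᵥ fun i => nuVec u i x) := by
      rw [← hV]
      simp only [dotProduct, mulVec, Finset.mul_sum]
      exact Finset.sum_congr rfl fun i _ => Finset.sum_congr rfl fun j _ => by ring
    have hsymm : ∀ w, (fun i => nuVec u i x) ⬝ᵥ (hess u x * gMat u x) *ᵥ w
        = (hess u x *ᵥ fun i => nuVec u i x) ⬝ᵥ gMat u x *ᵥ w := fun w => by
      rw [← mulVec_mulVec, dotProduct_mulVec, ← mulVec_transpose, hH]
    rw [hquad, ← hsymm]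
    simp only [dotProduct, Finset.mul_sum]
    exact Finset.sum_congr rfl fun k _ => by field_simp

end MinimalGraph

/-- The Euclidean (Ricci-flat) case of the paper's key subsolution inequality (8):
for a `C³` solution of the minimal surface equation on an open set `Ω ⊆ ℝⁿ`,
`Σ gⁱʲ vᵢⱼ ≥ (2/v) Σ gⁱʲ vᵢ vⱼ` at every point of `Ω`. -/
theorem subsolution_inequality_for_v (n : ℕ) (Ω : Set (EuclideanSpace ℝ (Fin n)))
    (hΩ : IsOpen Ω) (u : EuclideanSpace ℝ (Fin n) → ℝ) (hu : ContDiffOn ℝ 3 u Ω)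
    (hmse : SolvesMSE u Ω) :
    ∀ x ∈ Ω,
      (2 / vGrad u x) * ∑ i, ∑ j, gIJ u i j x * pd i (vGrad u) x * pd j (vGrad u) x
        ≤ ∑ i, ∑ j, gIJ u i j x * pd i (pd j (vGrad u)) x := by
  intro x hx
  have hux : ContDiffAt ℝ 3 u x := hu.contDiffAt (hΩ.mem_nhds hx)
  have hmse_near : ∀ᶠ y in 𝓝 x, ∑ i, ∑ j, gIJ u i j y * pd i (pd j u) y = 0 := by
    filter_upwards [hΩ.mem_nhds hx, hux.eventually (by simp)] with y hy huy
    exact hmse.sum_gIJ_mul_pd_pd_eq_zero hy (huy.of_le (by norm_num))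
  have hg : (gMat u x).PosSemidef := by
    rw [gMat_eq]
    exact posSemidef_one_sub_vecMulVec_self nuVec_dotProduct_nuVec_le_one
  have hgHgH : 0 ≤ ∑ i, ∑ j, gMat u x i j * (hess u x * gMat u x * (hess u x)ᵀ) i j :=
    hg.sum_sum_mul_nonneg (by simpa using hg.mul_mul_conjTranspose_same (hess u x))
  have hv : 0 < vGrad u x := vGrad_pos
  rw [div_mul_eq_mul_div, div_le_iff₀ hv]
  linarith [vGrad_mul_sum_gIJ_mul_pd_pd_vGrad hux hmse_near]
end

section
/- Let r > 0 and let C₊ be a constant with 0 ≤ C₊ < π²/(8r²). Let 0 < ρ ≤ r and let h : [0, ρ] → ℝ be a C² function with h(0) = 0, h(ρ) = 1, h ≥ 0, and h''(t) + 2C₊·h(t) ≥ 0 for all t ∈ [0, ρ]. Then for every t ∈ [0, ρ], h(t) ≤ cos(√(2C₊)·t)/cos(√(2C₊)·ρ) ≤ 1/cos(√(2C₊)·r). (Note that √(2C₊)·r < π/2, so cos(√(2C₊)·t) > 0 for all t ∈ [0, r].) -/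
/-!
Put `ω = √(2 C₊)` and `c t = cos (ω t)`; then `ω r < π / 2`, so `c > 0` on `[0, r]`, and
`c'' = -ω² c`. The Wronskian `W = h' c - h c'` has `W' = c (h'' + ω² h) ≥ 0`, and
`(h / c)' = W / c²`. So the derivative of `h / c` changes sign at most once, from negative to
positive, and `h / c` attains its maximum over `[0, ρ]` at an endpoint, where it is `0` or
`1 / cos (ω ρ)`. The second inequality is the monotonicity of `cos` on `[0, π]`.
-/

open Set Real

theorem le_max_of_hasDerivAt_div_of_monotoneOn {φ W g : ℝ → ℝ} {a b : ℝ}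
    (hφ : ContinuousOn φ (Icc a b)) (hφ' : ∀ t ∈ Ioo a b, HasDerivAt φ (W t / g t) t)
    (hg : ∀ t ∈ Ioo a b, 0 < g t) (hW : MonotoneOn W (Ioo a b)) :
    ∀ t ∈ Icc a b, φ t ≤ max (φ a) (φ b) := by
  rintro t ⟨hat, htb⟩
  by_contra! hlt
  obtain ⟨hφa, hφb⟩ := max_lt_iff.mp hlt
  have hat : a < t := hat.lt_of_ne (by rintro rfl; exact hφa.false)
  have htb : t < b := htb.lt_of_ne (by rintro rfl; exact hφb.false)
  obtain ⟨x, hxt, hslope_x⟩ := exists_hasDerivAt_eq_slope φ (fun t => W t / g t) hat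
    (hφ.mono (Icc_subset_Icc le_rfl htb.le)) fun x hx => hφ' x ⟨hx.1, hx.2.trans htb⟩
  obtain ⟨y, hyt, hslope_y⟩ := exists_hasDerivAt_eq_slope φ (fun t => W t / g t) htb
    (hφ.mono (Icc_subset_Icc hat.le le_rfl)) fun y hy => hφ' y ⟨hat.trans hy.1, hy.2⟩
  have hx : x ∈ Ioo a b := ⟨hxt.1, hxt.2.trans htb⟩
  have hy : y ∈ Ioo a b := ⟨hat.trans hyt.1, hyt.2⟩
  have hWx : 0 < W x := by
    rw [← div_pos_iff_of_pos_right (hg x hx), hslope_x]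
    exact div_pos (by linarith) (by linarith)
  have hWy : W y < 0 := by
    refine not_le.mp fun hWy => (div_nonneg hWy (hg y hy).le).not_gt ?_
    rw [hslope_y]
    exact div_neg_of_neg_of_pos (by linarith) (by linarith)
  linarith [hW hx hy (hxt.2.trans hyt.1).le]

theorem div_le_max_of_mul_deriv2_le {u u' u'' c c' c'' : ℝ → ℝ} {a b : ℝ}
    (hu : ContinuousOn u (Icc a b)) (hc : ContinuousOn c (Icc a b))
    (hc_pos : ∀ t ∈ Icc a b, 0 < c t)
    (hu' : ∀ t ∈ Ioo a b, HasDerivAt u (u' t) t) (hu'' : ∀ t ∈ Ioo a b, HasDerivAt u' (u'' t) t)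
    (hc' : ∀ t ∈ Ioo a b, HasDerivAt c (c' t) t) (hc'' : ∀ t ∈ Ioo a b, HasDerivAt c' (c'' t) t)
    (hwronskian : ∀ t ∈ Ioo a b, u t * c'' t ≤ u'' t * c t) :
    ∀ t ∈ Icc a b, u t / c t ≤ max (u a / c a) (u b / c b) := by
  have hc_ne : ∀ t ∈ Ioo a b, c t ≠ 0 := fun t ht => (hc_pos t (Ioo_subset_Icc_self ht)).ne'
  have hW : ∀ t ∈ Ioo a b,
      HasDerivAt (fun t => u' t * c t - u t * c' t) (u'' t * c t - u t * c'' t) t := fun t ht =>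
    (((hu'' t ht).mul (hc' t ht)).sub ((hu' t ht).mul (hc'' t ht))).congr_deriv (by ring)
  refine le_max_of_hasDerivAt_div_of_monotoneOn (hu.div hc fun t ht => (hc_pos t ht).ne')
    (fun t ht => (hu' t ht).div (hc' t ht) (hc_ne t ht))
    (fun t ht => pow_pos (hc_pos t (Ioo_subset_Icc_self ht)) 2) ?_
  refine monotoneOn_of_hasDerivWithinAt_nonneg (f' := fun t => u'' t * c t - u t * c'' t)
    (convex_Ioo a b)
    (fun t ht => (hW t ht).continuousAt.continuousWithinAt) ?_ ?_ <;> rw [interior_Ioo]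
  · exact fun t ht => (hW t ht).hasDerivWithinAt
  · exact fun t ht => sub_nonneg.mpr (hwronskian t ht)

theorem ContDiffOn.iteratedDerivWithin_two_Icc_of_mem_Ioo {f : ℝ → ℝ} {a b t : ℝ}
    (hf : ContDiffOn ℝ 2 f (Icc a b)) (ht : t ∈ Ioo a b) :
    iteratedDerivWithin 2 f (Icc a b) t = deriv (deriv f) t := by
  rw [iteratedDerivWithin_eq_iteratedDeriv (uniqueDiffOn_Icc (ht.1.trans ht.2))
    (hf.contDiffAt (Icc_mem_nhds ht.1 ht.2)) (Ioo_subset_Icc_self ht), iteratedDeriv_eq_iterate]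
  rfl

theorem ContDiffOn.hasDerivAt_deriv_of_mem_Ioo {f : ℝ → ℝ} {a b t : ℝ}
    (hf : ContDiffOn ℝ 2 f (Icc a b)) (ht : t ∈ Ioo a b) :
    HasDerivAt (deriv f) (deriv (deriv f) t) t :=
  (((hf.mono Ioo_subset_Icc_self).deriv_of_isOpen isOpen_Ioo (m := 1) (by norm_num)).contDiffAt
    (isOpen_Ioo.mem_nhds ht)).differentiableAt one_ne_zero |>.hasDerivAt

theorem sqrt_two_mul_mul_lt_pi_div_two {C r : ℝ} (hr : 0 < r) (hC : C < π ^ 2 / (8 * r ^ 2)) :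
    √(2 * C) * r < π / 2 := by
  have hsqrt : √(2 * C) < π / (2 * r) := by
    rw [sqrt_lt' (by positivity), div_pow, lt_div_iff₀ (by positivity)]
    rw [lt_div_iff₀ (by positivity)] at hC
    linarith
  calc √(2 * C) * r < π / (2 * r) * r := mul_lt_mul_of_pos_right hsqrt hr
    _ = π / 2 := by field_simp

theorem cos_mul_pos {ω r t : ℝ} (hω : 0 ≤ ω) (hωr : ω * r < π / 2) (ht : t ∈ Icc 0 r) :
    0 < cos (ω * t) :=
  cos_pos_of_mem_Ioo ⟨by linarith [pi_pos, mul_nonneg hω ht.1],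
    (mul_le_mul_of_nonneg_left ht.2 hω).trans_lt hωr⟩

theorem hasDerivAt_cos_mul (ω t : ℝ) :
    HasDerivAt (fun t => cos (ω * t)) (-(ω * sin (ω * t))) t :=
  ((hasDerivAt_id t).const_mul ω).cos.congr_deriv (by simp; ring)

theorem hasDerivAt_sin_mul (ω t : ℝ) :
    HasDerivAt (fun t => sin (ω * t)) (ω * cos (ω * t)) t :=
  ((hasDerivAt_id t).const_mul ω).sin.congr_deriv (by simp; ring)

theorem jacobi_field_norm_bound_general (r Cplus ρ : ℝ) (hr : 0 < r) (hC0 : 0 ≤ Cplus)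
    (hC : Cplus < Real.pi ^ 2 / (8 * r ^ 2)) (hρ0 : 0 < ρ) (hρr : ρ ≤ r)
    (h : ℝ → ℝ) (hh : ContDiffOn ℝ 2 h (Set.Icc 0 ρ))
    (h0 : h 0 = 0) (h1 : h ρ = 1)
    (hsub : ∀ t ∈ Set.Icc (0 : ℝ) ρ,
      0 ≤ iteratedDerivWithin 2 h (Set.Icc 0 ρ) t + 2 * Cplus * h t) :
    ∀ t ∈ Set.Icc (0 : ℝ) ρ,
      h t ≤ Real.cos (Real.sqrt (2 * Cplus) * t) / Real.cos (Real.sqrt (2 * Cplus) * ρ) ∧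
      Real.cos (Real.sqrt (2 * Cplus) * t) / Real.cos (Real.sqrt (2 * Cplus) * ρ)
        ≤ 1 / Real.cos (Real.sqrt (2 * Cplus) * r) := by
  set ω := √(2 * Cplus)
  have hω : ω ^ 2 = 2 * Cplus := sq_sqrt (by positivity)
  have hωr : ω * r < π / 2 := sqrt_two_mul_mul_lt_pi_div_two hr hC
  have hcos : ∀ t ∈ Icc 0 r, 0 < cos (ω * t) := fun t ht => cos_mul_pos (sqrt_nonneg _) hωr ht
  have hcosρ : ∀ t ∈ Icc 0 ρ, 0 < cos (ω * t) := fun t ht => hcos t ⟨ht.1, ht.2.trans hρr⟩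
  have hderiv : ∀ t ∈ Ioo 0 ρ, HasDerivAt h (deriv h t) t := fun t ht =>
    ((hh.contDiffAt (Icc_mem_nhds ht.1 ht.2)).differentiableAt two_ne_zero).hasDerivAt
  have hwronskian : ∀ t ∈ Ioo 0 ρ,
      h t * -(ω * (ω * cos (ω * t))) ≤ deriv (deriv h) t * cos (ω * t) := fun t ht => by
    have := mul_nonneg (hcosρ t (Ioo_subset_Icc_self ht)).le (hsub t (Ioo_subset_Icc_self ht))
    rw [hh.iteratedDerivWithin_two_Icc_of_mem_Ioo ht, ← hω] at this
    linarith
  have hquot := div_le_max_of_mul_deriv2_le hh.continuousOn (by fun_prop) hcosρ hderiv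
    (fun t ht => hh.hasDerivAt_deriv_of_mem_Ioo ht) (fun t _ => hasDerivAt_cos_mul ω t)
    (fun t _ => ((hasDerivAt_sin_mul ω t).const_mul ω).neg) hwronskian
  intro t ht
  have hρ : ρ ∈ Icc 0 ρ := ⟨hρ0.le, le_rfl⟩
  constructor
  · have hratio : h t / cos (ω * t) ≤ 1 / cos (ω * ρ) := by
      simpa [h0, h1, (hcosρ ρ hρ).le] using hquot t ht
    rw [div_le_div_iff₀ (hcosρ t ht) (hcosρ ρ hρ)] at hratio
    rw [le_div_iff₀ (hcosρ ρ hρ)]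
    linarith
  · refine div_le_div₀ zero_le_one (cos_le_one _) (hcos r ⟨hr.le, le_rfl⟩) ?_
    exact cos_le_cos_of_nonneg_of_le_pi (mul_nonneg (sqrt_nonneg _) hρ0.le) (by linarith [pi_pos])
      (mul_le_mul_of_nonneg_left hρr (sqrt_nonneg _))

/-- The quantitative ODE comparison of the paper's Step 4: if `0 ≤ Cplus < π²/(8r²)`,
`0 < ρ ≤ r`, and `h` is a nonnegative `C²` function on `[0, ρ]` with `h(0) = 0`,
`h(ρ) = 1` and `h'' + 2Cplus h ≥ 0`, then
`h(t) ≤ cos(√(2Cplus) t)/cos(√(2Cplus) ρ) ≤ 1/cos(√(2Cplus) r)` for every `t ∈ [0, ρ]`. -/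
theorem jacobi_field_norm_bound (r Cplus ρ : ℝ) (hr : 0 < r) (hC0 : 0 ≤ Cplus)
    (hC : Cplus < Real.pi ^ 2 / (8 * r ^ 2)) (hρ0 : 0 < ρ) (hρr : ρ ≤ r)
    (h : ℝ → ℝ) (hh : ContDiffOn ℝ 2 h (Set.Icc 0 ρ))
    (h0 : h 0 = 0) (h1 : h ρ = 1)
    (hpos : ∀ t ∈ Set.Icc (0 : ℝ) ρ, 0 ≤ h t)
    (hsub : ∀ t ∈ Set.Icc (0 : ℝ) ρ,
      0 ≤ iteratedDerivWithin 2 h (Set.Icc 0 ρ) t + 2 * Cplus * h t) :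
    ∀ t ∈ Set.Icc (0 : ℝ) ρ,
      h t ≤ Real.cos (Real.sqrt (2 * Cplus) * t) / Real.cos (Real.sqrt (2 * Cplus) * ρ) ∧
      Real.cos (Real.sqrt (2 * Cplus) * t) / Real.cos (Real.sqrt (2 * Cplus) * ρ)
        ≤ 1 / Real.cos (Real.sqrt (2 * Cplus) * r) :=
  jacobi_field_norm_bound_general r Cplus ρ hr hC0 hC hρ0 hρr h hh h0 h1 hsub
end

section
/- Let Ω ⊆ ℝⁿ be open and let u : Ω → ℝ be a C² function satisfying Σ_{i,j} g^{ij} u_{ij} = 0 on Ω, where v = √(1+|∇u|²), ν = ∇u/v, g^{ij} = δ^{ij} − ν^iν^j. Let u₀ > 0, let χ : Ω → ℝ be of class C², let f : ℝ → ℝ be of class C² with f' ≥ 0 and f'' ≥ 0, and define η(x) := f( u(x)/(2u₀) + χ(x) ). Then at every point of Ω, writing ψ = u/(2u₀) + χ: Σ_{i,j} g^{ij} ∂_i∂_j η ≥ f''(ψ)·( |∇u|² + 4u₀·(∇u·∇χ) )/( 4u₀²·(1+|∇u|²) ) + f'(ψ)·Σ_{i,j} g^{ij} ∂_i∂_j χ.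 -/
/-!
Differentiating `η = f ∘ ψ` twice gives `ηᵢⱼ = f''(ψ) ψᵢψⱼ + f'(ψ) ψᵢⱼ`. Contracted with `gⁱʲ`,
the part `f'(ψ) gⁱʲuᵢⱼ / (2u₀)` of the second term vanishes by the minimal surface equation.
Since `gⁱʲ = δⁱʲ − uᵢuⱼ/(1 + |∇u|²)`, splitting `∇ψ = ∇u/(2u₀) + ∇χ` turns `gⁱʲψᵢψⱼ` into
`(|∇u|² + 4u₀ ∇u·∇χ)/(4u₀²(1 + |∇u|²))` plus `gⁱʲχᵢχⱼ`, which is nonnegative by Cauchy–Schwarz;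
`f'' ≥ 0` finishes.
-/

open scoped BigOperators

section MetricForm

variable {ι : Type*} [Fintype ι]

theorem sum_sum_metric_mul_mul [DecidableEq ι] (p a b : ι → ℝ) :
    ∑ i, ∑ j, ((if i = j then 1 else 0) - p i * p j / (1 + ∑ k, p k ^ 2)) * (a i * b j)
      = ∑ i, a i * b i - (∑ i, p i * a i) * (∑ i, p i * b i) / (1 + ∑ k, p k ^ 2) := by
  simp only [sub_mul, Finset.sum_sub_distrib, ite_mul, one_mul, zero_mul,
    Finset.sum_ite_eq, Finset.mem_univ, if_true]
  rw [Finset.sum_mul_sum, Finset.sum_div]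
  congr 1
  refine Finset.sum_congr rfl fun i _ => ?_
  rw [Finset.sum_div]
  exact Finset.sum_congr rfl fun j _ => by ring

theorem sq_sum_mul_div_le_sum_sq (p q : ι → ℝ) :
    (∑ i, p i * q i) ^ 2 / (1 + ∑ k, p k ^ 2) ≤ ∑ i, q i ^ 2 := by
  have hS : 0 ≤ ∑ k, p k ^ 2 := Finset.sum_nonneg fun k _ => sq_nonneg _
  rw [div_le_iff₀ (by positivity)]
  nlinarith [Finset.sum_mul_sq_le_sq_mul_sq Finset.univ p q,
    Finset.sum_nonneg fun k (_ : k ∈ Finset.univ) => sq_nonneg (q k)]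

-- The gap is exactly the quadratic form of `q`, `|q|² − (p·q)²/(1 + |p|²)`, which is
-- nonnegative by Cauchy–Schwarz.
theorem le_sum_sum_metric_mul_div_add [DecidableEq ι] (p q : ι → ℝ) (c : ℝ) :
    ((∑ i, p i ^ 2) / c ^ 2 + 2 * (∑ i, p i * q i) / c) / (1 + ∑ k, p k ^ 2)
      ≤ ∑ i, ∑ j, ((if i = j then 1 else 0) - p i * p j / (1 + ∑ k, p k ^ 2))
          * ((p i / c + q i) * (p j / c + q j)) := by
  have hsq : ∑ i, (p i / c + q i) * (p i / c + q i)
      = (∑ i, p i ^ 2) / c ^ 2 + 2 * (∑ i, p i * q i) / c + ∑ i, q i ^ 2 := by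
    simp only [Finset.sum_div, Finset.mul_sum, ← Finset.sum_add_distrib]
    exact Finset.sum_congr rfl fun i _ => by ring
  have hlin : ∑ i, p i * (p i / c + q i) = (∑ i, p i ^ 2) / c + ∑ i, p i * q i := by
    simp only [Finset.sum_div, ← Finset.sum_add_distrib]
    exact Finset.sum_congr rfl fun i _ => by ring
  rw [sum_sum_metric_mul_mul, hsq, hlin]
  have hCS := sq_sum_mul_div_le_sum_sq p q
  set S := ∑ i, p i ^ 2
  set T := ∑ i, p i * q i
  have hS : 0 < 1 + S := by positivity
  have key : ((S / c + T) * (S / c + T)) / (1 + S)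
      = S * (S / c ^ 2 + 2 * T / c) / (1 + S) + T ^ 2 / (1 + S) := by
    rw [← add_div]; ring
  have split : (S / c ^ 2 + 2 * T / c) / (1 + S) + S * (S / c ^ 2 + 2 * T / c) / (1 + S)
      = S / c ^ 2 + 2 * T / c := by
    rw [← add_div]; exact div_eq_of_eq_mul hS.ne' (by ring)
  linarith

end MetricForm

section PartialDerivatives

variable {n : ℕ} {F G : EuclideanSpace ℝ (Fin n) → ℝ} {x : EuclideanSpace ℝ (Fin n)}
  {s : Set (EuclideanSpace ℝ (Fin n))}

theorem Filter.EventuallyEq.pd_eq (h : F =ᶠ[nhds x] G) (i : Fin n) : pd i F x = pd i G x := by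
  rw [pd, pd, h.fderiv_eq]

theorem pd_comp {g : ℝ → ℝ} (hg : DifferentiableAt ℝ g (F x)) (hF : DifferentiableAt ℝ F x)
    (i : Fin n) : pd i (fun y => g (F y)) x = deriv g (F x) * pd i F x := by
  have h : HasFDerivAt (fun y => g (F y)) (deriv g (F x) • fderiv ℝ F x) x :=
    hg.hasDerivAt.comp_hasFDerivAt x hF.hasFDerivAt
  rw [pd, pd, h.fderiv]
  rfl

theorem pd_mul (hF : DifferentiableAt ℝ F x) (hG : DifferentiableAt ℝ G x) (i : Fin n) :
    pd i (fun y => F y * G y) x = pd i F x * G x + F x * pd i G x := by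
  rw [pd, pd, pd, fderiv_fun_mul hF hG]
  simp only [add_apply, smul_apply, smul_eq_mul]
  ring

theorem pd_div_const_add (hF : DifferentiableAt ℝ F x) (hG : DifferentiableAt ℝ G x) (c : ℝ)
    (i : Fin n) : pd i (fun y => F y / c + G y) x = pd i F x / c + pd i G x := by
  have h : HasFDerivAt (fun y => F y / c + G y) (c⁻¹ • fderiv ℝ F x + fderiv ℝ G x) x := by
    simpa only [div_eq_mul_inv] using (hF.hasFDerivAt.mul_const c⁻¹).fun_add hG.hasFDerivAt
  rw [pd, pd, pd, h.fderiv, add_apply, smul_apply, smul_eq_mul, inv_mul_eq_div]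

theorem ContDiffOn.differentiableAt_pd (hF : ContDiffOn ℝ 2 F s) (hs : IsOpen s) (hx : x ∈ s)
    (j : Fin n) : DifferentiableAt ℝ (pd j F) x := by
  have hF' : ContDiffOn ℝ 1 (fderiv ℝ F) s := hF.fderiv_of_isOpen hs le_rfl
  exact ((hF'.differentiableOn one_ne_zero).differentiableAt (hs.mem_nhds hx)).clm_apply
    (differentiableAt_const _)

theorem pd_pd_comp {g : ℝ → ℝ} (hg : ContDiff ℝ 2 g) (hF : ContDiffOn ℝ 2 F s) (hs : IsOpen s)
    (hx : x ∈ s) (i j : Fin n) :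
    pd i (pd j (fun y => g (F y))) x
      = deriv (deriv g) (F x) * pd i F x * pd j F x + deriv g (F x) * pd i (pd j F) x := by
  have hFd : ∀ y ∈ s, DifferentiableAt ℝ F y := fun y hy =>
    (hF.differentiableOn two_ne_zero y hy).differentiableAt (hs.mem_nhds hy)
  have hg' : Differentiable ℝ (deriv g) := (hg.deriv' (n := 1)).differentiable one_ne_zero
  have hfirst : pd j (fun y => g (F y)) =ᶠ[nhds x] fun y => deriv g (F y) * pd j F y :=
    Filter.eventually_of_mem (hs.mem_nhds hx) fun y hy =>
      pd_comp (hg.differentiable two_ne_zero _) (hFd y hy) j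
  have hg'F : DifferentiableAt ℝ (fun y => deriv g (F y)) x := (hg' _).comp x (hFd x hx)
  rw [hfirst.pd_eq, pd_mul hg'F (hF.differentiableAt_pd hs hx j),
    pd_comp (hg' _) (hFd x hx)]

theorem pd_pd_div_const_add (hF : ContDiffOn ℝ 2 F s) (hG : ContDiffOn ℝ 2 G s) (hs : IsOpen s)
    (hx : x ∈ s) (c : ℝ) (i j : Fin n) :
    pd i (pd j (fun y => F y / c + G y)) x = pd i (pd j F) x / c + pd i (pd j G) x := by
  have hfirst : pd j (fun y => F y / c + G y) =ᶠ[nhds x] fun y => pd j F y / c + pd j G y :=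
    Filter.eventually_of_mem (hs.mem_nhds hx) fun y hy =>
      pd_div_const_add ((hF.differentiableOn two_ne_zero y hy).differentiableAt (hs.mem_nhds hy))
        ((hG.differentiableOn two_ne_zero y hy).differentiableAt (hs.mem_nhds hy)) c j
  rw [hfirst.pd_eq, pd_div_const_add (hF.differentiableAt_pd hs hx j)
    (hG.differentiableAt_pd hs hx j)]

end PartialDerivatives

theorem gIJ_eq {n : ℕ} (u : EuclideanSpace ℝ (Fin n) → ℝ) (i j : Fin n)
    (x : EuclideanSpace ℝ (Fin n)) :
    gIJ u i j x = (if i = j then 1 else 0) - pd i u x * pd j u x / (1 + ∑ k, pd k u x ^ 2) := by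
  rw [gIJ, nuVec, nuVec, div_mul_div_comm, vGrad,
    Real.mul_self_sqrt (by positivity)]

theorem eta_subsolution_inequality_general (n : ℕ) (Ω : Set (EuclideanSpace ℝ (Fin n)))
    (hΩ : IsOpen Ω) (u : EuclideanSpace ℝ (Fin n) → ℝ) (hu : ContDiffOn ℝ 2 u Ω)
    (hmse : ∀ x ∈ Ω, ∑ i, ∑ j, gIJ u i j x * pd i (pd j u) x = 0)
    (u₀ : ℝ)
    (χ : EuclideanSpace ℝ (Fin n) → ℝ) (hχ : ContDiffOn ℝ 2 χ Ω)
    (f : ℝ → ℝ) (hf : ContDiff ℝ 2 f)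
    (hf'' : ∀ s, 0 ≤ deriv (deriv f) s) :
    ∀ x ∈ Ω,
      deriv (deriv f) (u x / (2 * u₀) + χ x) *
          ((∑ i, (pd i u x) ^ 2) + 4 * u₀ * ∑ i, pd i u x * pd i χ x) /
          (4 * u₀ ^ 2 * (1 + ∑ i, (pd i u x) ^ 2))
        + deriv f (u x / (2 * u₀) + χ x) * ∑ i, ∑ j, gIJ u i j x * pd i (pd j χ) x
      ≤ ∑ i, ∑ j, gIJ u i j x * pd i (pd j (fun y => f (u y / (2 * u₀) + χ y))) x := by
  intro x hx
  set ψ := u x / (2 * u₀) + χ x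
  have hψ : ContDiffOn ℝ 2 (fun y => u y / (2 * u₀) + χ y) Ω := (hu.div_const _).add hχ
  have hdψ : ∀ i, pd i (fun y => u y / (2 * u₀) + χ y) x = pd i u x / (2 * u₀) + pd i χ x :=
    pd_div_const_add ((hu.differentiableOn two_ne_zero x hx).differentiableAt (hΩ.mem_nhds hx))
      ((hχ.differentiableOn two_ne_zero x hx).differentiableAt (hΩ.mem_nhds hx)) _
  have htrace : ∑ i, ∑ j, gIJ u i j x * pd i (pd j (fun y => f (u y / (2 * u₀) + χ y))) x
      = deriv (deriv f) ψ * ∑ i, ∑ j, gIJ u i j x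
          * ((pd i u x / (2 * u₀) + pd i χ x) * (pd j u x / (2 * u₀) + pd j χ x))
        + deriv f ψ / (2 * u₀) * ∑ i, ∑ j, gIJ u i j x * pd i (pd j u) x
        + deriv f ψ * ∑ i, ∑ j, gIJ u i j x * pd i (pd j χ) x := by
    simp only [Finset.mul_sum, ← Finset.sum_add_distrib]
    refine Finset.sum_congr rfl fun i _ => Finset.sum_congr rfl fun j _ => ?_
    rw [pd_pd_comp hf hψ hΩ hx, pd_pd_div_const_add hu hχ hΩ hx, hdψ, hdψ]
    ring
  rw [htrace, hmse x hx, mul_zero, add_zero, add_le_add_iff_right]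
  simp only [gIJ_eq]
  calc _ = deriv (deriv f) ψ * (((∑ i, pd i u x ^ 2) / (2 * u₀) ^ 2
          + 2 * (∑ i, pd i u x * pd i χ x) / (2 * u₀)) / (1 + ∑ k, pd k u x ^ 2)) := by
        field_simp
        ring
    _ ≤ _ := mul_le_mul_of_nonneg_left (le_sum_sum_metric_mul_div_add _ _ _) (hf'' ψ)

/-- The Euclidean version of the paper's inequality (9) (Step 2): for a `C²` solution
`u` of `Σ gⁱʲ uᵢⱼ = 0`, a `C²` function `χ`, and a `C²` convex nondecreasing `f`, the
function `η = f(u/(2u₀) + χ)` satisfies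
`Σ gⁱʲ ηᵢⱼ ≥ f''(ψ)(|∇u|² + 4u₀ ∇u·∇χ)/(4u₀²(1+|∇u|²)) + f'(ψ) Σ gⁱʲ χᵢⱼ`. -/
theorem eta_subsolution_inequality (n : ℕ) (Ω : Set (EuclideanSpace ℝ (Fin n)))
    (hΩ : IsOpen Ω) (u : EuclideanSpace ℝ (Fin n) → ℝ) (hu : ContDiffOn ℝ 2 u Ω)
    (hmse : ∀ x ∈ Ω, ∑ i, ∑ j, gIJ u i j x * pd i (pd j u) x = 0)
    (u₀ : ℝ) (hu₀ : 0 < u₀)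
    (χ : EuclideanSpace ℝ (Fin n) → ℝ) (hχ : ContDiffOn ℝ 2 χ Ω)
    (f : ℝ → ℝ) (hf : ContDiff ℝ 2 f)
    (hf' : ∀ s, 0 ≤ deriv f s) (hf'' : ∀ s, 0 ≤ deriv (deriv f) s) :
    ∀ x ∈ Ω,
      deriv (deriv f) (u x / (2 * u₀) + χ x) *
          ((∑ i, (pd i u x) ^ 2) + 4 * u₀ * ∑ i, pd i u x * pd i χ x) /
          (4 * u₀ ^ 2 * (1 + ∑ i, (pd i u x) ^ 2))
        + deriv f (u x / (2 * u₀) + χ x) * ∑ i, ∑ j, gIJ u i j x * pd i (pd j χ) x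
      ≤ ∑ i, ∑ j, gIJ u i j x * pd i (pd j (fun y => f (u y / (2 * u₀) + χ y))) x :=
  eta_subsolution_inequality_general n Ω hΩ u hu hmse u₀ χ hχ f hf hf''
end
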